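/- Let B₁, B₂, B₃, B₄ be the Bell states in ℂ²⊗ℂ² and σ the four-qubit reordering isomorphism. For an ordered pair (i,j) with i ≠ j, define the outcome set N(i,j) := { (a,b) ∈ {1,2,3,4}² : ⟨B_a ⊗ B_b, σ(B_i ⊗ B_j)⟩ ≠ 0 }. Then for any two distinct unordered pairs {i,j} ≠ {k,l} contained in {1,2,3}, the sets N(i,j) and N(k,l) are disjoint. (This establishes the correctness of the local Bell-measurement protocol proving that any three Bell states form a (3,2)-identifiable set: tallying the local Bell-basis outcomes perfectly reveals which unordered pair of Bell states from {B₁,B₂,B₃} was distributed.) -/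

import Mathlib

open scoped InnerProductSpace ComplexConjugate

noncomputable section

/-- The standard basis kets `|0⟩, |1⟩` of a qubit `ℂ² = EuclideanSpace ℂ (Fin 2)`. -/
def ket2 (i : Fin 2) : EuclideanSpace ℂ (Fin 2) := EuclideanSpace.single i 1

/-- Tensor product of vectors of Euclidean spaces, realized concretely:
`(x ⊗ y) (i, j) = x i * y j`.  The induced inner product on
`EuclideanSpace ℂ (ι × κ)` is exactly the tensor-product inner product. -/
def tp {ι κ : Type*} [Fintype ι] [Fintype κ]
    (x : EuclideanSpace ℂ ι) (y : EuclideanSpace ℂ κ) : EuclideanSpace ℂ (ι × κ) :=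
  (WithLp.equiv 2 _).symm fun p => x p.1 * y p.2

/-- The four Bell states `B₁, B₂, B₃, B₄` (indexed here by `0,1,2,3`). -/
def Bell : Fin 4 → EuclideanSpace ℂ (Fin 2 × Fin 2) :=
  ![((Real.sqrt 2 : ℂ))⁻¹ • (tp (ket2 0) (ket2 0) + tp (ket2 1) (ket2 1)),
    ((Real.sqrt 2 : ℂ))⁻¹ • (tp (ket2 0) (ket2 0) - tp (ket2 1) (ket2 1)),
    ((Real.sqrt 2 : ℂ))⁻¹ • (tp (ket2 0) (ket2 1) + tp (ket2 1) (ket2 0)),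
    ((Real.sqrt 2 : ℂ))⁻¹ • (tp (ket2 0) (ket2 1) - tp (ket2 1) (ket2 0))]

end

/-!
Give the Bell state with label `(s, t) ∈ (ℤ/2)²` the coordinates `2^(-1/2) ∑ₓ (-1)^(t x) |x, x + s⟩`;
then `B₁, B₂, B₃, B₄` carry the labels `0, (0,1), (1,0), (1,1)`. In coordinates the amplitude
`⟨B_a ⊗ B_b, σ(B_i ⊗ B_j)⟩` is a sum of delta functions times a character of `ℤ/2`: it is `±1/2`
when `a + b = i + j` and `0` otherwise (entanglement swapping). Hence `N(i,j)` depends only on the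
label sum `i + j`, and the three pairwise sums of the labels of `B₁, B₂, B₃` are distinct.
-/

section TensorCoordinates

variable {ι κ : Type*} [Fintype ι] [Fintype κ]

@[simp]
lemma tp_apply (x : EuclideanSpace ℂ ι) (y : EuclideanSpace ℂ κ) (p : ι × κ) :
    tp x y p = x p.1 * y p.2 := rfl

lemma tp_single [DecidableEq ι] [DecidableEq κ] (i : ι) (j : κ) (a b : ℂ) :
    tp (EuclideanSpace.single i a) (EuclideanSpace.single j b) =
      EuclideanSpace.single (i, j) (a * b) := by
  ext ⟨x, y⟩
  by_cases hx : x = i <;> by_cases hy : y = j <;> simp [hx, hy]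

end TensorCoordinates

lemma apply_eq_of_map_tp_tp {ι κ ι' κ' : Type*}
    [Fintype ι] [Fintype κ] [Fintype ι'] [Fintype κ']
    [DecidableEq ι] [DecidableEq κ] [DecidableEq ι'] [DecidableEq κ']
    (σ : EuclideanSpace ℂ ((ι × κ) × (ι' × κ')) →ₗ[ℂ] EuclideanSpace ℂ ((ι × ι') × (κ × κ')))
    (hσ : ∀ a₁ b₁ a₂ b₂, σ (tp (tp a₁ b₁) (tp a₂ b₂)) = tp (tp a₁ a₂) (tp b₁ b₂))
    (v : EuclideanSpace ℂ ((ι × κ) × (ι' × κ'))) (x₁ : ι) (x₂ : ι') (y₁ : κ) (y₂ : κ') :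
    σ v ((x₁, x₂), (y₁, y₂)) = v ((x₁, y₁), (x₂, y₂)) := by
  have hsingle : ∀ (p : ι) (q : κ) (r : ι') (s : κ'),
      EuclideanSpace.single ((p, q), (r, s)) (1 : ℂ) =
        tp (tp (EuclideanSpace.single p 1) (EuclideanSpace.single q 1))
          (tp (EuclideanSpace.single r 1) (EuclideanSpace.single s 1)) := by
    intro p q r s
    simp only [tp_single, mul_one]
  have hσ_eq : σ = (LinearIsometryEquiv.piLpCongrLeft 2 ℂ ℂ
      (Equiv.prodProdProdComm ι κ ι' κ')).toLinearEquiv.toLinearMap := by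
    refine (EuclideanSpace.basisFun _ ℂ).toBasis.ext fun ⟨⟨p, q⟩, ⟨r, s⟩⟩ => ?_
    simp only [OrthonormalBasis.coe_toBasis, EuclideanSpace.basisFun_apply]
    rw [hsingle, hσ, LinearEquiv.coe_coe, LinearIsometryEquiv.coe_toLinearEquiv, ← hsingle,
      EuclideanSpace.piLpCongrLeft_single]
    simp [tp_single]
  subst hσ_eq
  simp [LinearIsometryEquiv.piLpCongrLeft_apply, Equiv.piCongrLeft'_apply]

def qubitSign (x : Fin 2) : ℂ := if x = 0 then 1 else -1

lemma qubitSign_ne_zero (x : Fin 2) : qubitSign x ≠ 0 := by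
  unfold qubitSign
  split_ifs <;> norm_num

lemma qubitSign_add (x y : Fin 2) : qubitSign (x + y) = qubitSign x * qubitSign y := by
  fin_cases x <;> fin_cases y <;> simp [qubitSign]

lemma sum_qubitSign_mul (c : Fin 2) : ∑ x, qubitSign (c * x) = if c = 0 then 2 else 0 := by
  fin_cases c <;> simp [qubitSign, Fin.sum_univ_two]

def bellCoeff (u : Fin 2 × Fin 2) (x y : Fin 2) : ℂ :=
  if y = x + u.1 then qubitSign (u.2 * x) else 0

def bellLabel : Fin 4 → Fin 2 × Fin 2 := ![(0, 0), (0, 1), (1, 0), (1, 1)]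

lemma Bell_apply (c : Fin 4) (x y : Fin 2) :
    Bell c (x, y) = (Real.sqrt 2 : ℂ)⁻¹ * bellCoeff (bellLabel c) x y := by
  fin_cases c <;> fin_cases x <;> fin_cases y <;>
    simp [Bell, bellLabel, bellCoeff, ket2, qubitSign]

lemma conj_bellCoeff (u : Fin 2 × Fin 2) (x y : Fin 2) :
    conj (bellCoeff u x y) = bellCoeff u x y := by
  rw [bellCoeff, qubitSign]
  split_ifs <;> simp

open Fin.CommRing in
lemma sum_bellCoeff_mul (u v w z : Fin 2 × Fin 2) :
    ∑ p, ∑ q, ∑ r, ∑ s, bellCoeff u p q * bellCoeff v r s * (bellCoeff w p r * bellCoeff z q s) =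
      if u + v = w + z then 2 * qubitSign (v.2 * w.1 + z.2 * u.1) else 0 := by
  simp only [bellCoeff, mul_ite, ite_mul, mul_zero, zero_mul, Finset.sum_ite_eq', Finset.mem_univ,
    if_true]
  -- summing out `q = p + u.1` needs that delta outermost
  simp_rw [← ite_and, and_comm (a := _ + z.1 = _), ite_and, Finset.sum_ite_eq', Finset.mem_univ,
    if_true, add_assoc, add_right_inj, Finset.sum_ite_irrel, Finset.sum_const_zero]
  have hsign : ∀ x, qubitSign (u.2 * x) * qubitSign (v.2 * (x + w.1)) *
      (qubitSign (w.2 * x) * qubitSign (z.2 * (x + u.1))) =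
        qubitSign (v.2 * w.1 + z.2 * u.1) * qubitSign ((u.2 + v.2 + w.2 + z.2) * x) := by
    intro x
    simp only [← qubitSign_add]
    congr 1
    ring
  simp_rw [hsign, ← Finset.mul_sum, sum_qubitSign_mul, Prod.ext_iff, Prod.fst_add, Prod.snd_add]
  have hchar_two : ∀ a b c d : Fin 2,
      (a + d = c + b ↔ a + b = c + d) ∧ (a + b + c + d = 0 ↔ a + b = c + d) := by
    decide
  simp only [(hchar_two _ _ _ _).1, (hchar_two _ _ _ _).2]
  split_ifs <;> simp_all [mul_comm]

lemma inner_tp_Bell_map_tp_Bell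
    (σ : EuclideanSpace ℂ ((Fin 2 × Fin 2) × (Fin 2 × Fin 2)) →ₗ[ℂ]
         EuclideanSpace ℂ ((Fin 2 × Fin 2) × (Fin 2 × Fin 2)))
    (hσ : ∀ a₁ b₁ a₂ b₂ : EuclideanSpace ℂ (Fin 2),
      σ (tp (tp a₁ b₁) (tp a₂ b₂)) = tp (tp a₁ a₂) (tp b₁ b₂))
    (a b i j : Fin 4) :
    ⟪tp (Bell a) (Bell b), σ (tp (Bell i) (Bell j))⟫_ℂ =
      if bellLabel a + bellLabel b = bellLabel i + bellLabel j then
        2⁻¹ * qubitSign ((bellLabel b).2 * (bellLabel i).1 + (bellLabel j).2 * (bellLabel a).1)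
      else 0 := by
  have h4 : ((Real.sqrt 2 : ℂ)⁻¹) ^ 4 = 4⁻¹ := by
    rw [inv_pow, show 4 = 2 * 2 from rfl, pow_mul, ← Complex.ofReal_pow,
      Real.sq_sqrt zero_le_two]
    norm_num
  calc ⟪tp (Bell a) (Bell b), σ (tp (Bell i) (Bell j))⟫_ℂ
      = 4⁻¹ * ∑ p, ∑ q, ∑ r, ∑ s, bellCoeff (bellLabel a) p q * bellCoeff (bellLabel b) r s *
          (bellCoeff (bellLabel i) p r * bellCoeff (bellLabel j) q s) := by
        simp only [PiLp.inner_apply, Fintype.sum_prod_type, apply_eq_of_map_tp_tp σ hσ, tp_apply,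
          RCLike.inner_apply, Bell_apply, map_mul, map_inv₀, Complex.conj_ofReal, conj_bellCoeff,
          Finset.mul_sum, ← h4]
        congr! 4 with p q r s
        ring
    _ = _ := by
        rw [sum_bellCoeff_mul]
        split_ifs <;> ring

lemma inner_tp_Bell_map_tp_Bell_ne_zero_iff
    (σ : EuclideanSpace ℂ ((Fin 2 × Fin 2) × (Fin 2 × Fin 2)) →ₗ[ℂ]
         EuclideanSpace ℂ ((Fin 2 × Fin 2) × (Fin 2 × Fin 2)))
    (hσ : ∀ a₁ b₁ a₂ b₂ : EuclideanSpace ℂ (Fin 2),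
      σ (tp (tp a₁ b₁) (tp a₂ b₂)) = tp (tp a₁ a₂) (tp b₁ b₂))
    (a b i j : Fin 4) :
    ⟪tp (Bell a) (Bell b), σ (tp (Bell i) (Bell j))⟫_ℂ ≠ 0 ↔
      bellLabel a + bellLabel b = bellLabel i + bellLabel j := by
  rw [inner_tp_Bell_map_tp_Bell σ hσ]
  split_ifs with h
  · simpa [h] using qubitSign_ne_zero _
  · simpa using h

lemma eq_and_eq_or_eq_and_eq_of_bellLabel_add_eq {i j k l : Fin 4} (hi : i ≠ 3) (hj : j ≠ 3)
    (hk : k ≠ 3) (hl : l ≠ 3) (hij : i ≠ j)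
    (h : bellLabel i + bellLabel j = bellLabel k + bellLabel l) :
    i = k ∧ j = l ∨ i = l ∧ j = k := by
  revert i j k l
  decide

theorem bell_32_identifiable_outcomes_disjoint_general
    (σ : EuclideanSpace ℂ ((Fin 2 × Fin 2) × (Fin 2 × Fin 2)) →ₗ[ℂ]
         EuclideanSpace ℂ ((Fin 2 × Fin 2) × (Fin 2 × Fin 2)))
    (hσ : ∀ a₁ b₁ a₂ b₂ : EuclideanSpace ℂ (Fin 2),
      σ (tp (tp a₁ b₁) (tp a₂ b₂)) = tp (tp a₁ a₂) (tp b₁ b₂))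
    (i j k l : Fin 4)
    (hi : i ∈ ({0, 1, 2} : Set (Fin 4))) (hj : j ∈ ({0, 1, 2} : Set (Fin 4)))
    (hk : k ∈ ({0, 1, 2} : Set (Fin 4))) (hl : l ∈ ({0, 1, 2} : Set (Fin 4)))
    (hij : i ≠ j)
    (hpairs : ({i, j} : Set (Fin 4)) ≠ ({k, l} : Set (Fin 4))) :
    Disjoint
      {p : Fin 4 × Fin 4 | ⟪tp (Bell p.1) (Bell p.2), σ (tp (Bell i) (Bell j))⟫_ℂ ≠ 0}
      {p : Fin 4 × Fin 4 | ⟪tp (Bell p.1) (Bell p.2), σ (tp (Bell k) (Bell l))⟫_ℂ ≠ 0} := by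
  have ne_three : ∀ x ∈ ({0, 1, 2} : Set (Fin 4)), x ≠ 3 := by
    rintro x (rfl | rfl | rfl) <;> decide
  refine Set.disjoint_left.2 fun ⟨a, b⟩ hab_ij hab_kl => hpairs ?_
  rw [Set.mem_ofPred_eq, inner_tp_Bell_map_tp_Bell_ne_zero_iff σ hσ] at hab_ij hab_kl
  rcases eq_and_eq_or_eq_and_eq_of_bellLabel_add_eq (ne_three i hi) (ne_three j hj)
    (ne_three k hk) (ne_three l hl) hij (hab_ij.symm.trans hab_kl) with ⟨rfl, rfl⟩ | ⟨rfl, rfl⟩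
  · rfl
  · exact Set.pair_comm _ _

/-- With `σ` the reordering isomorphism, define for an ordered pair
`(i,j)`, `i ≠ j`, the outcome set
`N(i,j) = {(a,b) : ⟨B_a ⊗ B_b, σ(B_i ⊗ B_j)⟩ ≠ 0}`.  For any two distinct unordered
pairs `{i,j} ≠ {k,l}` contained in `{B₁,B₂,B₃}` (indices `0,1,2` here), the outcome
sets `N(i,j)` and `N(k,l)` are disjoint. -/
theorem bell_32_identifiable_outcomes_disjoint
    (σ : EuclideanSpace ℂ ((Fin 2 × Fin 2) × (Fin 2 × Fin 2)) →ₗ[ℂ]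
         EuclideanSpace ℂ ((Fin 2 × Fin 2) × (Fin 2 × Fin 2)))
    (hσ : ∀ a₁ b₁ a₂ b₂ : EuclideanSpace ℂ (Fin 2),
      σ (tp (tp a₁ b₁) (tp a₂ b₂)) = tp (tp a₁ a₂) (tp b₁ b₂))
    (i j k l : Fin 4)
    (hi : i ∈ ({0, 1, 2} : Set (Fin 4))) (hj : j ∈ ({0, 1, 2} : Set (Fin 4)))
    (hk : k ∈ ({0, 1, 2} : Set (Fin 4))) (hl : l ∈ ({0, 1, 2} : Set (Fin 4)))
    (hij : i ≠ j) (hkl : k ≠ l)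
    (hpairs : ({i, j} : Set (Fin 4)) ≠ ({k, l} : Set (Fin 4))) :
    Disjoint
      {p : Fin 4 × Fin 4 | ⟪tp (Bell p.1) (Bell p.2), σ (tp (Bell i) (Bell j))⟫_ℂ ≠ 0}
      {p : Fin 4 × Fin 4 | ⟪tp (Bell p.1) (Bell p.2), σ (tp (Bell k) (Bell l))⟫_ℂ ≠ 0} :=
  bell_32_identifiable_outcomes_disjoint_general σ hσ i j k l hi hj hk hl hij hpairs
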